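/- Let Φ ∈ ℂ^{n×m} have restricted isometry constant δ_{2s} with constant κ = 1, suppose δ_{2s} < √2 − 1, let Y = ΦX + E with ‖E‖₂ ≤ ε, and let X̂ minimize ‖Z‖₁ subject to ‖Y − ΦZ‖₂ ≤ ε. Then ‖X̂ − X‖₂ ≤ C₁ s^{−1/2} ‖X − X^{(s)}‖₁ + C₂ ε for absolute constants C₁, C₂, where X^{(s)} is the best s-sparse approximation of X. -/

import Mathlib

open Finset in
noncomputable def l2norm {k : ℕ} (x : Fin k → ℂ) : ℝ := Real.sqrt (∑ i, ‖x i‖ ^ 2)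

open Finset in
noncomputable def l1norm {k : ℕ} (x : Fin k → ℂ) : ℝ := ∑ i, ‖x i‖

open Finset in
noncomputable def sparsity {k : ℕ} (x : Fin k → ℂ) : ℕ :=
  (Finset.univ.filter fun i => x i ≠ 0).card

noncomputable def toE {k : ℕ} (x : Fin k → ℂ) : EuclideanSpace ℂ (Fin k) := WithLp.toLp 2 x

lemma l2norm_eq {k : ℕ} (x : Fin k → ℂ) : l2norm x = ‖toE x‖ := by
  rw [EuclideanSpace.norm_eq]; rfl

lemma toE_add {k : ℕ} (x y : Fin k → ℂ) : toE (x + y) = toE x + toE y := rfl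
lemma toE_sub {k : ℕ} (x y : Fin k → ℂ) : toE (x - y) = toE x - toE y := rfl
lemma toE_neg {k : ℕ} (x : Fin k → ℂ) : toE (-x) = - toE x := rfl
lemma toE_smul {k : ℕ} (c : ℂ) (x : Fin k → ℂ) : toE (c • x) = c • toE x := rfl
lemma toE_sum {k : ℕ} (s : Finset ℕ) (f : ℕ → Fin k → ℂ) :
    toE (∑ j ∈ s, f j) = ∑ j ∈ s, toE (f j) := by
  induction s using Finset.cons_induction with
  | empty => rfl
  | cons a s ha ih => rw [Finset.sum_cons, Finset.sum_cons, toE_add, ih]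

lemma l2norm_nonneg {k : ℕ} (x : Fin k → ℂ) : 0 ≤ l2norm x := Real.sqrt_nonneg _

lemma l2norm_sq {k : ℕ} (x : Fin k → ℂ) : l2norm x ^ 2 = ∑ i, ‖x i‖ ^ 2 := by
  rw [l2norm, Real.sq_sqrt]
  exact Finset.sum_nonneg fun i _ => sq_nonneg _

lemma l1norm_nonneg {k : ℕ} (x : Fin k → ℂ) : 0 ≤ l1norm x :=
  Finset.sum_nonneg fun i _ => norm_nonneg _

open Finset in
lemma sparsity_le_of_subset {k : ℕ} (x y : Fin k → ℂ)
    (h : ∀ i, x i ≠ 0 → y i ≠ 0) : sparsity x ≤ sparsity y := by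
  apply Finset.card_le_card
  intro i hi
  simp only [mem_filter, mem_univ, true_and] at *
  exact h i hi

open Finset in
lemma sparsity_add_le {k : ℕ} (x y : Fin k → ℂ) :
    sparsity (x + y) ≤ sparsity x + sparsity y := by
  classical
  calc (Finset.univ.filter fun i => (x + y) i ≠ 0).card
      ≤ ((Finset.univ.filter fun i => x i ≠ 0) ∪ (Finset.univ.filter fun i => y i ≠ 0)).card := by
        apply Finset.card_le_card
        intro i hi
        simp only [mem_filter, mem_univ, true_and, mem_union, Pi.add_apply] at *
        by_contra hc
        push_neg at hc
        simp [hc.1, hc.2] at hi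
    _ ≤ _ := Finset.card_union_le _ _

lemma sparsity_sub_le {k : ℕ} (x y : Fin k → ℂ) :
    sparsity (x - y) ≤ sparsity x + sparsity y := by
  have := sparsity_add_le x (-y)
  have hn : sparsity (-y) = sparsity y := by
    unfold sparsity; congr 1; ext i; simp
  rw [hn] at this
  simpa [sub_eq_add_neg] using this

lemma sparsity_smul_le {k : ℕ} (c : ℂ) (x : Fin k → ℂ) :
    sparsity (c • x) ≤ sparsity x := by
  apply sparsity_le_of_subset
  intro i hi h0
  simp [Pi.smul_apply, h0] at hi

lemma l2norm_smul {k : ℕ} (c : ℂ) (x : Fin k → ℂ) :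
    l2norm (c • x) = ‖c‖ * l2norm x := by
  rw [l2norm_eq, l2norm_eq, toE_smul, norm_smul]

/-- for pointwise-disjointly supported vectors, the squared l2 norms add. -/
lemma l2norm_sq_add_of_disjoint {k : ℕ} (x y : Fin k → ℂ)
    (hd : ∀ i, x i = 0 ∨ y i = 0) :
    l2norm (x + y) ^ 2 = l2norm x ^ 2 + l2norm y ^ 2 := by
  rw [l2norm_sq, l2norm_sq, l2norm_sq, ← Finset.sum_add_distrib]
  apply Finset.sum_congr rfl
  intro i _
  rcases hd i with h | h <;> simp [h]

lemma l2norm_sq_sub_of_disjoint {k : ℕ} (x y : Fin k → ℂ)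
    (hd : ∀ i, x i = 0 ∨ y i = 0) :
    l2norm (x - y) ^ 2 = l2norm x ^ 2 + l2norm y ^ 2 := by
  have := l2norm_sq_add_of_disjoint x (-y) (fun i => by rcases hd i with h | h <;> simp [h])
  rw [sub_eq_add_neg, this]
  congr 1
  rw [l2norm_eq, l2norm_eq, toE_neg, norm_neg]

lemma l2norm_eq_zero_iff {k : ℕ} (x : Fin k → ℂ) : l2norm x = 0 ↔ x = 0 := by
  rw [l2norm_eq, norm_eq_zero]
  exact ⟨fun h => by simpa [toE] using congrArg WithLp.ofLp h, fun h => by subst h; rfl⟩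

/-- Restricted orthogonality from RIP (real-part version). -/
lemma rip_ro {n m s : ℕ} {Φ : Matrix (Fin n) (Fin m) ℂ} {δ : ℝ} (hδ0 : 0 ≤ δ)
    (hRIP : ∀ Z : Fin m → ℂ, sparsity Z ≤ 2 * s →
      (1 - δ) * l2norm Z ^ 2 ≤ l2norm (Φ.mulVec Z) ^ 2 ∧
      l2norm (Φ.mulVec Z) ^ 2 ≤ (1 + δ) * l2norm Z ^ 2)
    (x y : Fin m → ℂ) (hd : ∀ i, x i = 0 ∨ y i = 0)
    (hsp : sparsity x + sparsity y ≤ 2 * s) :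
    |RCLike.re (inner ℂ (toE (Φ.mulVec x)) (toE (Φ.mulVec y)) : ℂ)| ≤ δ * l2norm x * l2norm y := by
  -- half version: re ≤ δ (‖x‖² + ‖y‖²)/2
  have half : ∀ x y : Fin m → ℂ, (∀ i, x i = 0 ∨ y i = 0) →
      sparsity x + sparsity y ≤ 2 * s →
      RCLike.re (inner ℂ (toE (Φ.mulVec x)) (toE (Φ.mulVec y)) : ℂ) ≤
        δ * (l2norm x ^ 2 + l2norm y ^ 2) / 2 := by
    intro x y hd hsp
    set A := toE (Φ.mulVec x)
    set B := toE (Φ.mulVec y)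
    have h1 : ‖A + B‖ ^ 2 = ‖A‖ ^ 2 + 2 * RCLike.re (inner ℂ A B : ℂ) + ‖B‖ ^ 2 := norm_add_sq A B
    have h2 : ‖A - B‖ ^ 2 = ‖A‖ ^ 2 - 2 * RCLike.re (inner ℂ A B : ℂ) + ‖B‖ ^ 2 := norm_sub_sq A B
    have hAB : A + B = toE (Φ.mulVec (x + y)) := by rw [Matrix.mulVec_add, toE_add]
    have hAB' : A - B = toE (Φ.mulVec (x - y)) := by rw [Matrix.mulVec_sub, toE_sub]
    have hsum := l2norm_sq_add_of_disjoint x y hd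
    have hsub := l2norm_sq_sub_of_disjoint x y hd
    have hup := (hRIP (x + y) (le_trans (sparsity_add_le x y) hsp)).2
    have hlo := (hRIP (x - y) (le_trans (sparsity_sub_le x y) hsp)).1
    rw [hsum] at hup
    rw [hsub] at hlo
    have e1 : l2norm (Φ.mulVec (x + y)) ^ 2 = ‖A + B‖ ^ 2 := by rw [hAB, l2norm_eq]
    have e2 : l2norm (Φ.mulVec (x - y)) ^ 2 = ‖A - B‖ ^ 2 := by rw [hAB', l2norm_eq]
    rw [e1] at hup
    rw [e2] at hlo
    nlinarith [hup, hlo, h1, h2]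
  -- zero cases
  by_cases hx : l2norm x = 0
  · have hx0 : x = 0 := (l2norm_eq_zero_iff x).mp hx
    subst hx0
    have h0 : Φ.mulVec (0 : Fin m → ℂ) = 0 := Matrix.mulVec_zero Φ
    have hz : (inner ℂ (toE (Φ.mulVec (0 : Fin m → ℂ))) (toE (Φ.mulVec y)) : ℂ) = 0 := by
      rw [show toE (Φ.mulVec (0 : Fin m → ℂ)) = (0 : EuclideanSpace ℂ (Fin n)) by rw [h0]; rfl]
      exact inner_zero_left _
    rw [hz, hx]
    simp
  by_cases hy : l2norm y = 0
  · have hy0 : y = 0 := (l2norm_eq_zero_iff y).mp hy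
    subst hy0
    have h0 : Φ.mulVec (0 : Fin m → ℂ) = 0 := Matrix.mulVec_zero Φ
    have hz : (inner ℂ (toE (Φ.mulVec x)) (toE (Φ.mulVec (0 : Fin m → ℂ))) : ℂ) = 0 := by
      rw [show toE (Φ.mulVec (0 : Fin m → ℂ)) = (0 : EuclideanSpace ℂ (Fin n)) by rw [h0]; rfl]
      exact inner_zero_right _
    rw [hz, hy]
    simp
  have hx0 : 0 < l2norm x := lt_of_le_of_ne (l2norm_nonneg x) (Ne.symm hx)
  have hy0 : 0 < l2norm y := lt_of_le_of_ne (l2norm_nonneg y) (Ne.symm hy)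
  set lam : ℝ := Real.sqrt (l2norm y / l2norm x) with hlam
  have hlam0 : 0 < lam := Real.sqrt_pos.mpr (div_pos hy0 hx0)
  have hlamsq : lam ^ 2 = l2norm y / l2norm x := Real.sq_sqrt (le_of_lt (div_pos hy0 hx0))
  set x' : Fin m → ℂ := (lam : ℂ) • x with hx'
  set y' : Fin m → ℂ := ((lam⁻¹ : ℝ) : ℂ) • y with hy'
  have hd' : ∀ i, x' i = 0 ∨ y' i = 0 := by
    intro i; rcases hd i with h | h
    · left; simp [hx', h]
    · right; simp [hy', h]
  have hsp' : sparsity x' + sparsity y' ≤ 2 * s :=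
    le_trans (add_le_add (sparsity_smul_le _ x) (sparsity_smul_le _ y)) hsp
  have hinner : (inner ℂ (toE (Φ.mulVec x')) (toE (Φ.mulVec y')) : ℂ) =
      (inner ℂ (toE (Φ.mulVec x)) (toE (Φ.mulVec y)) : ℂ) := by
    rw [hx', hy', Matrix.mulVec_smul, Matrix.mulVec_smul, toE_smul, toE_smul,
      inner_smul_left, inner_smul_right]
    have : (starRingEnd ℂ) ((lam : ℝ) : ℂ) = ((lam : ℝ) : ℂ) := by
      simp [Complex.conj_ofReal]
    rw [this]
    rw [← mul_assoc]
    have : ((lam : ℝ) : ℂ) * ((lam⁻¹ : ℝ) : ℂ) = 1 := by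
      rw [← Complex.ofReal_mul, mul_inv_cancel₀ (ne_of_gt hlam0), Complex.ofReal_one]
    rw [this, one_mul]
  have hnx' : l2norm x' = lam * l2norm x := by
    rw [hx', l2norm_smul, Complex.norm_real, Real.norm_eq_abs, abs_of_pos hlam0]
  have hny' : l2norm y' = lam⁻¹ * l2norm y := by
    rw [hy', l2norm_smul, Complex.norm_real, Real.norm_eq_abs, abs_of_pos (inv_pos.mpr hlam0)]
  have key : l2norm x' ^ 2 + l2norm y' ^ 2 = 2 * (l2norm x * l2norm y) := by
    rw [hnx', hny']
    have h1 : (lam * l2norm x) ^ 2 = (l2norm y / l2norm x) * l2norm x ^ 2 := by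
      rw [mul_pow, hlamsq]
    have h2 : (lam⁻¹ * l2norm y) ^ 2 = (l2norm x / l2norm y) * l2norm y ^ 2 := by
      rw [mul_pow, ← Real.sqrt_inv, Real.sq_sqrt (by positivity)]
      rw [inv_div]
    rw [h1, h2]
    field_simp
    ring
  have hneg : ∀ i, x' i = 0 ∨ (-y') i = 0 := by
    intro i; rcases hd' i with h | h
    · left; exact h
    · right; simp [h]
  have hspneg : sparsity x' + sparsity (-y') ≤ 2 * s := by
    have : sparsity (-y') = sparsity y' := by
      unfold sparsity; congr 1; ext i; simp
    rw [this]; exact hsp'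
  have hb1 := half x' y' hd' hsp'
  have hb2 := half x' (-y') hneg hspneg
  have hmneg : toE (Φ.mulVec (-y')) = - toE (Φ.mulVec y') := by
    rw [show Φ.mulVec (-y') = - Φ.mulVec y' from Matrix.mulVec_neg y' Φ, toE_neg]
  rw [hmneg, inner_neg_right, map_neg] at hb2
  have hny'' : l2norm (-y') = l2norm y' := by
    rw [l2norm_eq, l2norm_eq, toE_neg, norm_neg]
  rw [hny''] at hb2
  rw [hinner] at hb1 hb2
  rw [abs_le]
  constructor
  · nlinarith [hb2, key]
  · nlinarith [hb1, key]


lemma le_of_sq_le_sq' (a b : ℝ) (h : a^2 ≤ b^2) (ha : 0 ≤ a) (hb : 0 ≤ b) : a ≤ b := by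
  nlinarith [h, ha, hb, mul_nonneg ha hb]

set_option maxHeartbeats 4000000 in
lemma final_numeric (a b c d S t e δ r2 : ℝ)
    (hr2sq : r2^2 = 2) (hr2nn : 0 ≤ r2)
    (hδ0 : 0 ≤ δ) (hδle : δ ≤ r2 - 1)
    (hann : 0 ≤ a) (hbnn : 0 ≤ b) (hcnn : 0 ≤ c) (hdnn : 0 ≤ d)
    (hSnn : 0 ≤ S) (htnn : 0 ≤ t) (hε : 0 ≤ e)
    (hc2 : c^2 = a^2 + b^2)
    (hlo : (1-δ)*c^2 ≤ d^2) (hup : d^2 ≤ (1+δ)*c^2)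
    (hid : d^2 ≤ 2*e*d + δ*(a+b)*S)
    (hSt : S ≤ a + 2*t) :
    c ≤ 36*e + 41*t := by
  have hr2l : (1.414 : ℝ) ≤ r2 := by nlinarith [hr2sq, hr2nn]
  have hr2u : r2 ≤ 1.4143 := by nlinarith [hr2sq, hr2nn]
  have hr2u' : r2 ≤ 1.41422 := by nlinarith [hr2sq, hr2nn]
  have hdc : d ≤ 1.5*c := by nlinarith [hup, sq_nonneg c]
  have hacle : a ≤ c := by nlinarith [hc2, sq_nonneg b]
  have hbcle : b ≤ c := by nlinarith [hc2, sq_nonneg a]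
  have key1 : (2 - r2)*c^2 ≤ 3*e*c + (r2-1)*((a+b)*(a+2*t)) := by
    have s3 : 2*e*d ≤ 3*e*c := by nlinarith [hdc, hε]
    have s4 : δ*(a+b)*S ≤ (r2-1)*((a+b)*(a+2*t)) := by
      have hab : 0 ≤ a + b := by linarith
      have e1 : δ*(a+b)*S ≤ (r2-1)*(a+b)*S := by
        apply mul_le_mul_of_nonneg_right _ hSnn
        apply mul_le_mul_of_nonneg_right hδle hab
      have e2 : (r2-1)*(a+b)*S ≤ (r2-1)*(a+b)*(a+2*t) := by
        apply mul_le_mul_of_nonneg_left hSt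
        have h1 : (0:ℝ) ≤ r2 - 1 := by linarith
        positivity
      calc δ*(a+b)*S ≤ (r2-1)*(a+b)*S := e1
        _ ≤ (r2-1)*(a+b)*(a+2*t) := e2
        _ = (r2-1)*((a+b)*(a+2*t)) := by ring
    have s5 : (2-r2)*c^2 ≤ (1-δ)*c^2 := by nlinarith [sq_nonneg c]
    linarith [hlo, hid, s3, s4, s5]
  have PD : (r2-1)*(a^2+a*b) + (1/12)*(a^2+b^2) ≤ (2-r2)*(a^2+b^2) := by
    nlinarith [sq_nonneg (a - 2.4*b), sq_nonneg a, sq_nonneg b, hr2u', hr2l,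
      hann, hbnn, mul_nonneg hann hbnn]
  have g1 : (1/12)*c^2 ≤ 3*e*c + (r2-1)*(2*t*(a+b)) := by
    nlinarith [key1, hc2, PD]
  have g2 : (r2-1)*(2*t*(a+b)) ≤ 3.4*t*c := by
    nlinarith [mul_le_mul_of_nonneg_left hacle htnn, mul_le_mul_of_nonneg_left hbcle htnn,
      mul_nonneg htnn (add_nonneg hann hbnn), hr2u, hr2l, mul_nonneg htnn hcnn]
  nlinarith [g1, g2, hcnn, hε, htnn, mul_nonneg hε hcnn, mul_nonneg htnn hcnn]

set_option maxHeartbeats 3000000 in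
/-- Candès' RIP recovery theorem for basis pursuit denoising. -/
theorem rip_recovery :
    ∃ C₁ C₂ : ℝ, 0 < C₁ ∧ 0 < C₂ ∧
      ∀ (n m s : ℕ) (Φ : Matrix (Fin n) (Fin m) ℂ) (δ : ℝ)
        (X Xs Xhat : Fin m → ℂ) (E Y : Fin n → ℂ) (ε : ℝ),
        0 < s → 0 ≤ δ → δ < Real.sqrt 2 - 1 →
        -- Φ has restricted isometry constant δ_{2s} ≤ δ (with κ = 1)
        (∀ Z : Fin m → ℂ, sparsity Z ≤ 2 * s →
          (1 - δ) * l2norm Z ^ 2 ≤ l2norm (Φ.mulVec Z) ^ 2 ∧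
          l2norm (Φ.mulVec Z) ^ 2 ≤ (1 + δ) * l2norm Z ^ 2) →
        -- data model
        0 ≤ ε → Y = Φ.mulVec X + E → l2norm E ≤ ε →
        -- Xs is a best s-sparse approximation of X in the ℓ¹ sense
        sparsity Xs ≤ s →
        (∀ Z : Fin m → ℂ, sparsity Z ≤ s → l1norm (X - Xs) ≤ l1norm (X - Z)) →
        -- Xhat is a basis-pursuit minimizer
        l2norm (Y - Φ.mulVec Xhat) ≤ ε →
        (∀ Z : Fin m → ℂ, l2norm (Y - Φ.mulVec Z) ≤ ε → l1norm Xhat ≤ l1norm Z) →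
        l2norm (Xhat - X) ≤ C₁ * (s : ℝ) ^ (-(1:ℝ)/2) * l1norm (X - Xs) + C₂ * ε := by
  classical
  refine ⟨100, 100, by norm_num, by norm_num, ?_⟩
  intro n m s Φ δ X Xs Xhat E Y ε hs hδ0 hδlt hRIP hε hY hE hXssp _hXsbest hfeas hmin
  set r2 : ℝ := Real.sqrt 2 with hr2def
  have hr2sq : r2 ^ 2 = 2 := Real.sq_sqrt (by norm_num)
  have hr2nn : (0:ℝ) ≤ r2 := Real.sqrt_nonneg 2
  have hδle : δ ≤ r2 - 1 := le_of_lt hδlt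
  -- setup
  set h : Fin m → ℂ := Xhat - X with hh
  set v0 : Fin m → ℂ := fun i => if Xs i ≠ 0 then h i else 0 with hv0
  set u : Fin m → ℂ := fun i => if Xs i ≠ 0 then 0 else h i with hu
  have hvu : h = v0 + u := by
    funext i
    by_cases hXi : Xs i = 0 <;> simp [hv0, hu, hXi]
  set σ : Equiv.Perm (Fin m) := Tuple.sort (fun i => -‖u i‖) with hσ
  have hmono : Monotone ((fun i => -‖u i‖) ∘ σ) := Tuple.monotone_sort _
  have hanti : ∀ k l : Fin m, k ≤ l → ‖u (σ l)‖ ≤ ‖u (σ k)‖ := by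
    intro k l hkl
    have := hmono hkl
    simp only [Function.comp_apply, neg_le_neg_iff] at this
    exact this
  set p : Fin m → ℕ := fun i => (σ.symm i : ℕ) / s with hp
  set K : ℕ := m / s + 1 with hK
  have hpK : ∀ i, p i < K := by
    intro i
    have : (σ.symm i : ℕ) / s ≤ m / s := Nat.div_le_div_right (le_of_lt (Fin.is_lt _))
    exact Nat.lt_succ_of_le this
  set w : ℕ → Fin m → ℂ := fun j i => if p i = j then u i else 0 with hw
  have husum : u = ∑ j ∈ Finset.range K, w j := by
    funext i
    rw [Finset.sum_apply]
    simp only [hw]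
    rw [Finset.sum_ite_eq (Finset.range K) (p i) (fun _ => u i)]
    simp [Finset.mem_range.mpr (hpK i)]
  -- block cardinalities
  have hcard : ∀ j, (Finset.univ.filter fun i => p i = j).card ≤ s := by
    intro j
    have hsub : ∀ i ∈ Finset.univ.filter (fun i => p i = j),
        ((σ.symm i : ℕ)) ∈ Finset.Ico (j*s) (j*s+s) := by
      intro i hi
      simp only [Finset.mem_filter, Finset.mem_univ, true_and] at hi
      have hdm := Nat.div_add_mod (σ.symm i : ℕ) s
      have hml := Nat.mod_lt (σ.symm i : ℕ) hs
      have heq : (σ.symm i : ℕ)/s = j := hi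
      rw [Finset.mem_Ico]
      constructor
      · calc j*s = s*((σ.symm i : ℕ)/s) := by rw [heq]; ring
          _ ≤ (σ.symm i : ℕ) := Nat.mul_div_le _ _
      · calc (σ.symm i : ℕ) = s*((σ.symm i : ℕ)/s) + (σ.symm i : ℕ) % s := hdm.symm
          _ < s*j + s := by rw [heq]; omega
          _ = j*s + s := by ring
    have hinj : Set.InjOn (fun i => ((σ.symm i : ℕ)))
        ↑(Finset.univ.filter fun i => p i = j) := by
      intro i _ i' _ hii'
      exact σ.symm.injective (Fin.val_injective hii')
    have := Finset.card_le_card_of_injOn _ hsub hinj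
    rw [Nat.card_Ico] at this
    omega
  have hfull : ∀ j, (∃ i, p i = j + 1) →
      s ≤ (Finset.univ.filter fun i => p i = j).card := by
    rintro j ⟨i0, hi0⟩
    have hm0 : 0 < m := Fin.pos (σ.symm i0)
    have hjs : (j+1)*s ≤ (σ.symm i0 : ℕ) := by
      have : j + 1 ≤ (σ.symm i0 : ℕ)/s := le_of_eq hi0.symm
      exact (Nat.le_div_iff_mul_le hs).mp this
    have hmm : (j+1)*s ≤ m := le_trans hjs (le_of_lt (Fin.is_lt _))
    have hsub : ∀ k ∈ Finset.Ico (j*s) (j*s+s),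
        (σ ⟨k % m, Nat.mod_lt k hm0⟩) ∈ Finset.univ.filter (fun i => p i = j) := by
      intro k hk
      rw [Finset.mem_Ico] at hk
      have hkm : k < m := by
        calc k < j*s + s := hk.2
          _ = (j+1)*s := by ring
          _ ≤ m := hmm
      have hmod : k % m = k := Nat.mod_eq_of_lt hkm
      simp only [Finset.mem_filter, Finset.mem_univ, true_and, hp]
      have : (σ.symm (σ ⟨k % m, Nat.mod_lt k hm0⟩) : ℕ) = k := by
        rw [Equiv.symm_apply_apply]
        simp [hmod]
      rw [this]
      refine Nat.div_eq_of_lt_le hk.1 ?_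
      calc k < j*s + s := hk.2
        _ = (j+1)*s := by ring
    have hinj : Set.InjOn (fun k => σ ⟨k % m, Nat.mod_lt k hm0⟩)
        ↑(Finset.Ico (j*s) (j*s+s)) := by
      intro k hk k' hk' hkk'
      simp only [Finset.coe_Ico, Set.mem_Ico] at hk hk'
      have hkm : k < m := by
        calc k < j*s+s := hk.2
          _ = (j+1)*s := by ring
          _ ≤ m := hmm
      have hkm' : k' < m := by
        calc k' < j*s+s := hk'.2
          _ = (j+1)*s := by ring
          _ ≤ m := hmm
      have heq : (⟨k % m, Nat.mod_lt k hm0⟩ : Fin m) = ⟨k' % m, Nat.mod_lt k' hm0⟩ :=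
        σ.injective hkk'
      have hv := congrArg Fin.val heq
      simpa [Nat.mod_eq_of_lt hkm, Nat.mod_eq_of_lt hkm'] using hv
    have := Finset.card_le_card_of_injOn _ hsub hinj
    rw [Nat.card_Ico] at this
    omega
  -- minimum bound on a full block
  have hkey : ∀ j (i : Fin m), p i = j + 1 →
      (s : ℝ) * ‖u i‖ ≤ ∑ i' ∈ Finset.univ.filter (fun i' => p i' = j), ‖u i'‖ := by
    intro j i hpi
    have hcardeq : (Finset.univ.filter fun i' => p i' = j).card = s :=
      le_antisymm (hcard j) (hfull j ⟨i, hpi⟩)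
    have hsymmi : (j+1)*s ≤ (σ.symm i : ℕ) := by
      have : j + 1 ≤ (σ.symm i : ℕ)/s := le_of_eq hpi.symm
      exact (Nat.le_div_iff_mul_le hs).mp this
    have hle : ∀ i' ∈ Finset.univ.filter (fun i' => p i' = j), ‖u i‖ ≤ ‖u i'‖ := by
      intro i' hi'
      simp only [Finset.mem_filter, Finset.mem_univ, true_and] at hi'
      have h1 : (σ.symm i' : ℕ) < (j+1)*s := by
        have hdm := Nat.div_add_mod (σ.symm i' : ℕ) s
        have hml := Nat.mod_lt (σ.symm i' : ℕ) hs
        have heq : (σ.symm i' : ℕ)/s = j := hi'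
        calc (σ.symm i' : ℕ) = s*((σ.symm i' : ℕ)/s) + (σ.symm i' : ℕ) % s := hdm.symm
          _ < s*j + s := by rw [heq]; omega
          _ = (j+1)*s := by ring
      have hord : (σ.symm i' : Fin m) ≤ σ.symm i := by
        rw [Fin.le_def]
        exact le_of_lt (lt_of_lt_of_le h1 hsymmi)
      have := hanti (σ.symm i') (σ.symm i) hord
      simpa [Equiv.apply_symm_apply] using this
    have := Finset.card_nsmul_le_sum (Finset.univ.filter fun i' => p i' = j)
      (fun i' => ‖u i'‖) (‖u i‖) hle
    rw [hcardeq] at this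
    simpa [nsmul_eq_mul] using this
  -- l1 and l2 of blocks
  have hl1w : ∀ j, l1norm (w j) = ∑ i ∈ Finset.univ.filter (fun i => p i = j), ‖u i‖ := by
    intro j
    unfold l1norm
    have hptw : ∀ i : Fin m, ‖w j i‖ = if p i = j then ‖u i‖ else 0 := by
      intro i; by_cases hpi : p i = j <;> simp [hw, hpi]
    calc ∑ i, ‖w j i‖
        = ∑ i, (if p i = j then ‖u i‖ else 0) := Finset.sum_congr rfl (fun i _ => hptw i)
      _ = ∑ i ∈ Finset.univ.filter (fun i => p i = j), ‖u i‖ := (Finset.sum_filter _ _).symm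
  have hl2w : ∀ j, l2norm (w j) ^ 2 = ∑ i ∈ Finset.univ.filter (fun i => p i = j), ‖u i‖^2 := by
    intro j
    rw [l2norm_sq]
    have hptw : ∀ i : Fin m, ‖w j i‖^2 = if p i = j then ‖u i‖^2 else 0 := by
      intro i; by_cases hpi : p i = j <;> simp [hw, hpi]
    calc ∑ i, ‖w j i‖^2
        = ∑ i, (if p i = j then ‖u i‖^2 else 0) := Finset.sum_congr rfl (fun i _ => hptw i)
      _ = ∑ i ∈ Finset.univ.filter (fun i => p i = j), ‖u i‖^2 := (Finset.sum_filter _ _).symm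
  have hblock : ∀ j, l2norm (w (j+1)) ≤ (Real.sqrt s)⁻¹ * l1norm (w j) := by
    intro j
    have hS1 : 0 ≤ l1norm (w j) := l1norm_nonneg _
    have hsqs : (0:ℝ) < Real.sqrt s := Real.sqrt_pos.mpr (by exact_mod_cast hs)
    have hsq : l2norm (w (j+1))^2 ≤ ((Real.sqrt s)⁻¹ * l1norm (w j))^2 := by
      rw [hl2w]
      have hbd : ∀ i ∈ Finset.univ.filter (fun i => p i = j+1),
          ‖u i‖^2 ≤ (l1norm (w j)/s)^2 := by
        intro i hi
        simp only [Finset.mem_filter, Finset.mem_univ, true_and] at hi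
        have hk := hkey j i hi
        rw [← hl1w j] at hk
        have h1 : ‖u i‖ ≤ l1norm (w j)/s := by
          rw [le_div_iff₀ (by exact_mod_cast hs)]
          linarith [hk]
        exact pow_le_pow_left₀ (norm_nonneg _) h1 2
      calc ∑ i ∈ Finset.univ.filter (fun i => p i = j+1), ‖u i‖^2
          ≤ ∑ _i ∈ Finset.univ.filter (fun i => p i = j+1), (l1norm (w j)/s)^2 :=
            Finset.sum_le_sum hbd
        _ = ((Finset.univ.filter (fun i => p i = j+1)).card : ℝ) * (l1norm (w j)/s)^2 := by
            rw [Finset.sum_const, nsmul_eq_mul]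
        _ ≤ (s:ℝ) * (l1norm (w j)/s)^2 := by
            apply mul_le_mul_of_nonneg_right _ (by positivity)
            exact_mod_cast hcard (j+1)
        _ = ((Real.sqrt s)⁻¹ * l1norm (w j))^2 := by
            rw [mul_pow, ← Real.sq_sqrt (show (0:ℝ) ≤ (s:ℝ) by positivity)]
            field_simp
            rw [Real.sqrt_sq hsqs.le]
            ring
    exact le_of_sq_le_sq' _ _ hsq (l2norm_nonneg _) (by positivity)
  -- sum of block l2 norms
  set Ssum : ℝ := ∑ j ∈ Finset.Ico 1 K, l2norm (w j) with hSsum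
  have hSsumnn : 0 ≤ Ssum :=
    Finset.sum_nonneg fun j _ => l2norm_nonneg _
  have hl1u : ∑ j ∈ Finset.range K, l1norm (w j) = l1norm u := by
    unfold l1norm
    rw [Finset.sum_comm]
    apply Finset.sum_congr rfl
    intro i _
    have hptw : ∀ j' : ℕ, ‖w j' i‖ = if p i = j' then ‖u i‖ else 0 := by
      intro j'; by_cases hpi : p i = j' <;> simp [hw, hpi]
    calc ∑ j' ∈ Finset.range K, ‖w j' i‖
        = ∑ j' ∈ Finset.range K, (if p i = j' then ‖u i‖ else 0) :=
          Finset.sum_congr rfl (fun j' _ => hptw j')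
      _ = ‖u i‖ := by rw [Finset.sum_ite_eq]; simp [Finset.mem_range.mpr (hpK i)]
  have hSsumle : Ssum ≤ (Real.sqrt s)⁻¹ * l1norm u := by
    have hsqs : (0:ℝ) < Real.sqrt s := Real.sqrt_pos.mpr (by exact_mod_cast hs)
    rw [hSsum, Finset.sum_Ico_eq_sum_range]
    calc ∑ j ∈ Finset.range (K-1), l2norm (w (1+j))
        ≤ ∑ j ∈ Finset.range (K-1), (Real.sqrt s)⁻¹ * l1norm (w j) := by
          apply Finset.sum_le_sum
          intro j _
          rw [add_comm]
          exact hblock j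
      _ = (Real.sqrt s)⁻¹ * ∑ j ∈ Finset.range (K-1), l1norm (w j) := by
          rw [Finset.mul_sum]
      _ ≤ (Real.sqrt s)⁻¹ * ∑ j ∈ Finset.range K, l1norm (w j) := by
          apply mul_le_mul_of_nonneg_left _ (by positivity)
          apply Finset.sum_le_sum_of_subset_of_nonneg
          · exact Finset.range_subset_range.mpr (Nat.sub_le K 1)
          · intro j _ _; exact l1norm_nonneg _
      _ = (Real.sqrt s)⁻¹ * l1norm u := by rw [hl1u]
  -- the 2s-sparse head
  set v01 : Fin m → ℂ := v0 + w 0 with hv01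
  set a : ℝ := l2norm v0 with ha
  set b : ℝ := l2norm (w 0) with hb
  set c : ℝ := l2norm v01 with hc
  set d : ℝ := l2norm (Φ.mulVec v01) with hd
  have hann : 0 ≤ a := l2norm_nonneg _
  have hbnn : 0 ≤ b := l2norm_nonneg _
  have hcnn : 0 ≤ c := l2norm_nonneg _
  have hdnn : 0 ≤ d := l2norm_nonneg _
  have hdisj0 : ∀ i, v0 i = 0 ∨ w 0 i = 0 := by
    intro i
    by_cases hXi : Xs i = 0
    · left; simp [hv0, hXi]
    · right; simp [hw, hu, hXi]
  have hc2 : c^2 = a^2 + b^2 := l2norm_sq_add_of_disjoint v0 (w 0) hdisj0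
  -- sparsity facts
  have hspv0 : sparsity v0 ≤ s := by
    refine le_trans (sparsity_le_of_subset v0 Xs ?_) hXssp
    intro i hi
    by_contra hXi
    exact hi (by
      show (if Xs i ≠ 0 then h i else 0) = 0
      rw [if_neg (show ¬ (Xs i ≠ 0) by simp [hXi])])
  have hspw : ∀ j, sparsity (w j) ≤ s := by
    intro j
    refine le_trans ?_ (hcard j)
    apply Finset.card_le_card
    intro i hi
    have hi' : w j i ≠ 0 := (Finset.mem_filter.mp hi).2
    refine Finset.mem_filter.mpr ⟨Finset.mem_univ i, ?_⟩
    by_contra hpi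
    exact hi' (by show (if p i = j then u i else 0) = 0; rw [if_neg hpi])
  have hspv01 : sparsity v01 ≤ 2*s := by
    have h1 := sparsity_add_le v0 (w 0)
    have h0 := hspw 0
    calc sparsity v01 = sparsity (v0 + w 0) := by rw [hv01]
      _ ≤ sparsity v0 + sparsity (w 0) := h1
      _ ≤ 2*s := by omega
  have hlo := (hRIP v01 hspv01).1
  have hup := (hRIP v01 hspv01).2
  rw [← hc, ← hd] at hlo hup
  -- decomposition of h
  have hhd : h = v01 + ∑ j ∈ Finset.Ico 1 K, w j := by
    rw [hvu, husum, hv01]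
    have h0K : 0 < K := Nat.succ_pos _
    rw [Finset.range_eq_Ico, Finset.sum_eq_sum_Ico_succ_bot h0K]
    rw [add_assoc]
  have hPhih : toE (Φ.mulVec h) = toE (Φ.mulVec v01) + ∑ j ∈ Finset.Ico 1 K, toE (Φ.mulVec (w j)) := by
    rw [hhd, Matrix.mulVec_add, toE_add]
    congr 1
    have hms : Φ.mulVec (∑ j ∈ Finset.Ico 1 K, w j) = ∑ j ∈ Finset.Ico 1 K, Φ.mulVec (w j) := by
      simp only [← Matrix.mulVecLin_apply]
      exact map_sum Φ.mulVecLin w (Finset.Ico 1 K)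
    rw [hms, toE_sum]
  -- tube constraint
  have hEeq : Y - Φ.mulVec X = E := by rw [hY]; ring
  have htube : ‖toE (Φ.mulVec h)‖ ≤ 2*ε := by
    have hsplit : Φ.mulVec h = (Y - Φ.mulVec X) - (Y - Φ.mulVec Xhat) := by
      rw [hh, Matrix.mulVec_sub]; ring
    rw [hsplit, toE_sub]
    calc ‖toE (Y - Φ.mulVec X) - toE (Y - Φ.mulVec Xhat)‖
        ≤ ‖toE (Y - Φ.mulVec X)‖ + ‖toE (Y - Φ.mulVec Xhat)‖ := norm_sub_le _ _
      _ ≤ ε + ε := by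
          apply add_le_add
          · rw [← l2norm_eq, hEeq]; exact hE
          · rw [← l2norm_eq]; exact hfeas
      _ = 2*ε := by ring
  -- main inequality
  have hid : d^2 ≤ 2*ε*d + δ*(a+b)*Ssum := by
    set A : EuclideanSpace ℂ (Fin n) := toE (Φ.mulVec v01) with hA
    have hdA : d = ‖A‖ := l2norm_eq _
    have hinner : RCLike.re (inner ℂ A (toE (Φ.mulVec h)) : ℂ) =
        ‖A‖^2 + ∑ j ∈ Finset.Ico 1 K, RCLike.re (inner ℂ A (toE (Φ.mulVec (w j))) : ℂ) := by
      rw [hPhih, inner_add_right, inner_sum, map_add, map_sum, inner_self_eq_norm_sq]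
    have h1 : RCLike.re (inner ℂ A (toE (Φ.mulVec h)) : ℂ) ≤ ‖A‖ * (2*ε) :=
      le_trans (re_inner_le_norm _ _) (mul_le_mul_of_nonneg_left htube (norm_nonneg A))
    have h2 : ∀ j ∈ Finset.Ico 1 K,
        -(RCLike.re (inner ℂ A (toE (Φ.mulVec (w j))) : ℂ)) ≤ δ*(a+b)*l2norm (w j) := by
      intro j hj
      have hj1 : 1 ≤ j := (Finset.mem_Ico.mp hj).1
      have hAsplit : A = toE (Φ.mulVec v0) + toE (Φ.mulVec (w 0)) := by
        rw [hA, hv01, Matrix.mulVec_add, toE_add]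
      rw [hAsplit, inner_add_left, map_add]
      have hd0 : ∀ i, v0 i = 0 ∨ w j i = 0 := by
        intro i
        by_cases hXi : Xs i = 0
        · left; simp [hv0, hXi]
        · right; simp [hw, hu, hXi]
      have hd1 : ∀ i, w 0 i = 0 ∨ w j i = 0 := by
        intro i
        by_cases h0 : p i = 0
        · right; simp [hw, show ¬ (p i = j) by omega]
        · left; simp [hw, h0]
      have hsp0 : sparsity v0 + sparsity (w j) ≤ 2*s := by
        have := hspw j; omega
      have hsp1 : sparsity (w 0) + sparsity (w j) ≤ 2*s := by
        have := hspw j; have := hspw 0; omega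
      have hr0 := rip_ro hδ0 hRIP v0 (w j) hd0 hsp0
      have hr1 := rip_ro hδ0 hRIP (w 0) (w j) hd1 hsp1
      have hr0' := (abs_le.mp hr0).1
      have hr1' := (abs_le.mp hr1).1
      rw [← ha] at hr0'
      rw [← hb] at hr1'
      nlinarith [hr0', hr1']
    have hsum2 : -(∑ j ∈ Finset.Ico 1 K, RCLike.re (inner ℂ A (toE (Φ.mulVec (w j))) : ℂ))
        ≤ δ*(a+b)*Ssum := by
      rw [← Finset.sum_neg_distrib]
      calc ∑ j ∈ Finset.Ico 1 K, -(RCLike.re (inner ℂ A (toE (Φ.mulVec (w j))) : ℂ))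
          ≤ ∑ j ∈ Finset.Ico 1 K, δ*(a+b)*l2norm (w j) := Finset.sum_le_sum h2
        _ = δ*(a+b)*Ssum := by rw [hSsum, Finset.mul_sum]
    have hAA : ‖A‖^2 ≤ ‖A‖*(2*ε) + δ*(a+b)*Ssum := by linarith [h1, hsum2, hinner.le, hinner.ge]
    rw [hdA]
    linarith [hAA]
  -- cone constraint
  have hXfeas : l2norm (Y - Φ.mulVec X) ≤ ε := by rw [hEeq]; exact hE
  have hl1min : l1norm Xhat ≤ l1norm X := hmin X hXfeas
  set e0 : ℝ := l1norm (X - Xs) with he0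
  have he0nn : 0 ≤ e0 := l1norm_nonneg _
  have hcone : l1norm u ≤ l1norm v0 + 2*e0 := by
    have hpt : ∀ i : Fin m, ‖u i‖ ≤ (‖Xhat i‖ - ‖X i‖) + ‖v0 i‖
        + 2*(if Xs i ≠ 0 then 0 else ‖X i - Xs i‖) := by
      intro i
      have hhi : h i = Xhat i - X i := by rw [hh]; simp
      by_cases hXi : Xs i = 0
      · have hXine : ¬ (Xs i ≠ 0) := by simp [hXi]
        have hui : u i = h i := by
          show (if Xs i ≠ 0 then 0 else h i) = h i; rw [if_neg hXine]
        have hv0i : v0 i = 0 := by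
          show (if Xs i ≠ 0 then h i else 0) = 0; rw [if_neg hXine]
        have hite : (if Xs i ≠ 0 then (0:ℝ) else ‖X i - Xs i‖) = ‖X i‖ := by
          rw [if_neg hXine, hXi, sub_zero]
        rw [hui, hv0i, hite, hhi]
        have h1 : ‖Xhat i - X i‖ ≤ ‖Xhat i‖ + ‖X i‖ := norm_sub_le _ _
        simp only [norm_zero]
        linarith
      · have hXine : Xs i ≠ 0 := hXi
        have hui : u i = 0 := by
          show (if Xs i ≠ 0 then 0 else h i) = 0; rw [if_pos hXine]
        have hv0i : v0 i = h i := by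
          show (if Xs i ≠ 0 then h i else 0) = h i; rw [if_pos hXine]
        have hite : (if Xs i ≠ 0 then (0:ℝ) else ‖X i - Xs i‖) = 0 := by
          rw [if_pos hXine]
        rw [hui, hv0i, hite, hhi]
        have h1 : ‖X i‖ ≤ ‖Xhat i‖ + ‖Xhat i - X i‖ := by
          calc ‖X i‖ = ‖Xhat i - (Xhat i - X i)‖ := by congr 1; ring
            _ ≤ ‖Xhat i‖ + ‖Xhat i - X i‖ := norm_sub_le _ _
        simp only [norm_zero]
        linarith
    have hsum := Finset.sum_le_sum (fun i (_ : i ∈ Finset.univ) => hpt i)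
    have hg : ∑ i : Fin m, (if Xs i ≠ 0 then 0 else ‖X i - Xs i‖) ≤ e0 := by
      rw [he0]
      unfold l1norm
      apply Finset.sum_le_sum
      intro i _
      by_cases hXi : Xs i = 0
      · simp [hXi]
      · simp [hXi, norm_nonneg]
    have hexp : ∑ i : Fin m, ((‖Xhat i‖ - ‖X i‖) + ‖v0 i‖
        + 2*(if Xs i ≠ 0 then 0 else ‖X i - Xs i‖))
        = ((∑ i : Fin m, ‖Xhat i‖) - ∑ i : Fin m, ‖X i‖) + (∑ i : Fin m, ‖v0 i‖)
          + 2*∑ i : Fin m, (if Xs i ≠ 0 then 0 else ‖X i - Xs i‖) := by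
      rw [Finset.sum_add_distrib, Finset.sum_add_distrib, Finset.sum_sub_distrib,
        ← Finset.mul_sum]
    rw [hexp] at hsum
    have hXX : (∑ i : Fin m, ‖Xhat i‖) - (∑ i : Fin m, ‖X i‖) ≤ 0 := by
      have := hl1min
      unfold l1norm at this
      linarith
    unfold l1norm
    linarith [hsum, hg, hXX]
  -- Cauchy–Schwarz on the support of v0
  have hCS : l1norm v0 ≤ Real.sqrt s * a := by
    have hsub : l1norm v0 = ∑ i ∈ Finset.univ.filter (fun i => v0 i ≠ 0), ‖v0 i‖ := by
      unfold l1norm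
      rw [Finset.sum_filter_of_ne]
      intro i _ hne
      by_contra hv
      simp [hv] at hne
    have hcs2 : (∑ i ∈ Finset.univ.filter (fun i => v0 i ≠ 0), ‖v0 i‖)^2
        ≤ (s:ℝ) * a^2 := by
      have hCS0 := Finset.sum_mul_sq_le_sq_mul_sq (Finset.univ.filter (fun i => v0 i ≠ 0))
        (fun i => ‖v0 i‖) (fun _ => (1:ℝ))
      simp only [mul_one, one_pow] at hCS0
      have hcard2 : (∑ _i ∈ Finset.univ.filter (fun i => v0 i ≠ 0), (1:ℝ)) ≤ (s:ℝ) := by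
        rw [Finset.sum_const, nsmul_eq_mul, mul_one]
        exact_mod_cast hspv0
      have hsq2 : ∑ i ∈ Finset.univ.filter (fun i => v0 i ≠ 0), ‖v0 i‖^2 ≤ a^2 := by
        rw [ha, l2norm_sq]
        apply Finset.sum_le_sum_of_subset_of_nonneg (Finset.filter_subset _ _)
        intro i _ _
        positivity
      calc (∑ i ∈ Finset.univ.filter (fun i => v0 i ≠ 0), ‖v0 i‖)^2
          ≤ (∑ i ∈ Finset.univ.filter (fun i => v0 i ≠ 0), ‖v0 i‖^2)
            * ∑ _i ∈ Finset.univ.filter (fun i => v0 i ≠ 0), (1:ℝ) := hCS0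
        _ ≤ a^2 * (s:ℝ) := by
            apply mul_le_mul hsq2 hcard2 (Finset.sum_nonneg fun _ _ => zero_le_one) (by positivity)
        _ = (s:ℝ) * a^2 := by ring
    rw [hsub]
    apply le_of_sq_le_sq' _ _ _ (Finset.sum_nonneg fun i _ => norm_nonneg _) (by positivity)
    calc (∑ i ∈ Finset.univ.filter (fun i => v0 i ≠ 0), ‖v0 i‖)^2 ≤ (s:ℝ)*a^2 := hcs2
      _ = (Real.sqrt s * a)^2 := by
          rw [mul_pow, Real.sq_sqrt (by positivity)]
  -- final Ssum bound
  set t : ℝ := (Real.sqrt s)⁻¹ * e0 with htdef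
  have hsqs : (0:ℝ) < Real.sqrt s := Real.sqrt_pos.mpr (by exact_mod_cast hs)
  have htnn : 0 ≤ t := by positivity
  have hSt : Ssum ≤ a + 2*t := by
    calc Ssum ≤ (Real.sqrt s)⁻¹ * l1norm u := hSsumle
      _ ≤ (Real.sqrt s)⁻¹ * (Real.sqrt s * a + 2*e0) := by
          apply mul_le_mul_of_nonneg_left _ (by positivity)
          linarith [hcone, hCS]
      _ = a + 2*t := by
          rw [htdef]
          field_simp
  -- final assembly
  have hfinal : l2norm (Xhat - X) ≤ c + Ssum := by
    rw [← hh]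
    rw [l2norm_eq, hhd, toE_add, toE_sum]
    calc ‖toE v01 + ∑ j ∈ Finset.Ico 1 K, toE (w j)‖
        ≤ ‖toE v01‖ + ‖∑ j ∈ Finset.Ico 1 K, toE (w j)‖ := norm_add_le _ _
      _ ≤ ‖toE v01‖ + ∑ j ∈ Finset.Ico 1 K, ‖toE (w j)‖ := by
          apply add_le_add_right
          exact norm_sum_le _ _
      _ = c + Ssum := by
          rw [hc, hSsum, l2norm_eq]
          congr 1
          apply Finset.sum_congr rfl
          intro j _
          rw [l2norm_eq]
  have hkeyfinal : c ≤ 36*ε + 41*t :=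
    final_numeric a b c d Ssum t ε δ r2 hr2sq hr2nn hδ0 hδle hann hbnn hcnn hdnn
      hSsumnn htnn hε hc2 hlo hup hid hSt
  have hacle : a ≤ c := le_of_sq_le_sq' _ _ (by nlinarith [hc2, sq_nonneg b]) hann hcnn
  have hss : (s:ℝ) ^ (-(1:ℝ)/2) = (Real.sqrt s)⁻¹ := by
    rw [show (-(1:ℝ)/2) = -(1/2 : ℝ) by norm_num]
    rw [Real.rpow_neg (by positivity)]
    rw [← Real.sqrt_eq_rpow]
  calc l2norm (Xhat - X) ≤ c + Ssum := hfinal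
    _ ≤ c + (a + 2*t) := by linarith [hSt]
    _ ≤ 2*c + 2*t := by linarith [hacle]
    _ ≤ 2*(36*ε + 41*t) + 2*t := by linarith [hkeyfinal]
    _ = 72*ε + 84*t := by ring
    _ ≤ 100 * (s:ℝ) ^ (-(1:ℝ)/2) * e0 + 100*ε := by
        rw [hss]
        have h100 : (100 : ℝ) * (Real.sqrt s)⁻¹ * e0 = 100 * t := by rw [htdef]; ring
        rw [h100]
        linarith [htnn, hε]
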